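/- arXiv:2301.09551 — 8 statements merged into one kernel-verified Lean document; each statement's English description precedes it below -/
import Mathlib

section
/- Let X be a topological space with cellularity c(X) ≤ κ and let U be a collection of open subsets of X. Then there exists a subcollection V of U with |V| ≤ κ such that ⋃U ⊆ closure(⋃V). -/
open Set

/-- The star of a set `A` with respect to a family `𝒰`: the union of all members of `𝒰`
meeting `A`. -/
def star' {X : Type*} (A : Set X) (𝒰 : Set (Set X)) : Set X :=
  ⋃₀ {u ∈ 𝒰 | (u ∩ A).Nonempty}

/-- A subset `M` of a space is Menger (as a subspace), expressed relatively: for every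
sequence of covers of `M` by open subsets of `X` there are finite subfamilies whose
union covers `M`. -/
def MengerSet {X : Type*} [TopologicalSpace X] (M : Set X) : Prop :=
  ∀ 𝒰 : ℕ → Set (Set X), (∀ n, ∀ u ∈ 𝒰 n, IsOpen u) → (∀ n, M ⊆ ⋃₀ 𝒰 n) →
    ∃ 𝒱 : ℕ → Set (Set X), (∀ n, 𝒱 n ⊆ 𝒰 n ∧ (𝒱 n).Finite) ∧ M ⊆ ⋃ n, ⋃₀ 𝒱 n

/-- A space `X` is Menger. -/
def MengerSpace (X : Type*) [TopologicalSpace X] : Prop :=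
  ∀ 𝒰 : ℕ → Set (Set X), (∀ n, (∀ u ∈ 𝒰 n, IsOpen u) ∧ ⋃₀ 𝒰 n = univ) →
    ∃ 𝒱 : ℕ → Set (Set X), (∀ n, 𝒱 n ⊆ 𝒰 n ∧ (𝒱 n).Finite) ∧ ⋃ n, ⋃₀ 𝒱 n = univ

/-- A space `X` is star Menger: every open cover has a Menger star kernel. -/
def StarMenger (X : Type*) [TopologicalSpace X] : Prop :=
  ∀ 𝒰 : Set (Set X), (∀ u ∈ 𝒰, IsOpen u) → ⋃₀ 𝒰 = univ →
    ∃ M : Set X, MengerSet M ∧ star' M 𝒰 = univ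

universe u

/-- If `c(X) ≤ κ` and `𝒰` is a family of open sets, there is `𝒱 ⊆ 𝒰` with `|𝒱| ≤ κ`
and `⋃𝒰 ⊆ closure (⋃𝒱)`. -/
theorem stmt3 {X : Type u} [TopologicalSpace X] (κ : Cardinal.{u})
    (hc : ∀ 𝒞 : Set (Set X), (∀ c ∈ 𝒞, IsOpen c ∧ c.Nonempty) →
      𝒞.PairwiseDisjoint id → Cardinal.mk ↥𝒞 ≤ κ)
    (𝒰 : Set (Set X)) (h𝒰 : ∀ u ∈ 𝒰, IsOpen u) :
    ∃ 𝒱 ⊆ 𝒰, Cardinal.mk ↥𝒱 ≤ κ ∧ ⋃₀ 𝒰 ⊆ closure (⋃₀ 𝒱) := by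
  classical
  set S : Set (Set X) := {c | IsOpen c ∧ c.Nonempty ∧ ∃ u ∈ 𝒰, c ⊆ u} with hSdef
  set T : Set (Set (Set X)) := {𝒟 | 𝒟 ⊆ S ∧ 𝒟.PairwiseDisjoint id} with hTdef
  obtain ⟨𝒟, h𝒟max⟩ : ∃ 𝒟, Maximal (· ∈ T) 𝒟 := by
    apply zorn_subset
    intro c hcT hchain
    refine ⟨⋃₀ c, ⟨?_, ?_⟩, fun s hs => subset_sUnion_of_mem hs⟩
    · intro x hx
      obtain ⟨𝒟, h𝒟, hx𝒟⟩ := hx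
      exact (hcT h𝒟).1 hx𝒟
    · intro a ha b hb hab
      obtain ⟨𝒟a, h𝒟a, ha'⟩ := ha
      obtain ⟨𝒟b, h𝒟b, hb'⟩ := hb
      rcases hchain.total h𝒟a h𝒟b with h | h
      · exact (hcT h𝒟b).2 (h ha') hb' hab
      · exact (hcT h𝒟a).2 ha' (h hb') hab
  obtain ⟨h𝒟S, h𝒟pd⟩ := h𝒟max.1
  have hch : ∀ d ∈ 𝒟, ∃ u ∈ 𝒰, d ⊆ u := fun d hd => (h𝒟S hd).2.2
  choose f hf1 hf2 using hch
  set g : ↥𝒟 → Set X := fun d => f d d.2 with hgdef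
  refine ⟨Set.range g, ?_, ?_, ?_⟩
  · rintro v ⟨d, rfl⟩
    exact hf1 d d.2
  · calc Cardinal.mk ↥(Set.range g) ≤ Cardinal.mk ↥𝒟 := Cardinal.mk_range_le
      _ ≤ κ := hc 𝒟 (fun c hcd => ⟨(h𝒟S hcd).1, (h𝒟S hcd).2.1⟩) h𝒟pd
  · rintro x ⟨u, hu, hxu⟩
    rw [mem_closure_iff]
    intro W hW hxW
    have hc' : W ∩ u ∈ S := ⟨hW.inter (h𝒰 u hu), ⟨x, hxW, hxu⟩, u, hu, inter_subset_right⟩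
    -- find d ∈ 𝒟 meeting W ∩ u
    have : ∃ d ∈ 𝒟, ((W ∩ u) ∩ d).Nonempty := by
      by_contra hno
      push_neg at hno
      simp only [← Set.not_nonempty_iff_eq_empty] at hno
      have hmem : W ∩ u ∈ 𝒟 := by
        have hins : insert (W ∩ u) 𝒟 ∈ T := by
          refine ⟨insert_subset hc' h𝒟S, ?_⟩
          rw [Set.pairwiseDisjoint_insert]
          refine ⟨h𝒟pd, fun d hd _ => ?_⟩
          exact Set.disjoint_iff_inter_eq_empty.2 (Set.not_nonempty_iff_eq_empty.1 (hno d hd))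
        have := h𝒟max.2 hins (subset_insert _ _)
        exact this (mem_insert _ _)
      exact hno _ hmem ⟨x, ⟨hxW, hxu⟩, ⟨hxW, hxu⟩⟩
    obtain ⟨d, hd, y, ⟨hyW, _⟩, hyd⟩ := this
    exact ⟨y, hyW, g ⟨d, hd⟩, ⟨⟨d, hd⟩, rfl⟩, hf2 d hd hyd⟩
end

section
/- Every ccc Luzin space is Lindelöf. More precisely, if L is a Hausdorff space satisfying the countable chain condition in which every nowhere dense subset is countable, then L is Lindelöf. -/
open Set

/-- A ccc Hausdorff space in which every nowhere dense set is countable is Lindelöf. -/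
theorem stmt4 {L : Type*} [TopologicalSpace L] [T2Space L]
    (hccc : ∀ 𝒞 : Set (Set L), (∀ c ∈ 𝒞, IsOpen c ∧ c.Nonempty) →
      𝒞.PairwiseDisjoint id → 𝒞.Countable)
    (hLuzin : ∀ A : Set L, IsNowhereDense A → A.Countable) :
    LindelofSpace L := by
  constructor
  rw [isLindelof_iff_countable_subcover]
  intro ι U hUo hcov
  -- maximal disjoint family of nonempty open sets refining U
  set S : Set (Set (Set L)) :=
    {𝒞 | (∀ c ∈ 𝒞, IsOpen c ∧ c.Nonempty ∧ ∃ i, c ⊆ U i) ∧ 𝒞.PairwiseDisjoint id} with hS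
  obtain ⟨𝒱, h𝒱max⟩ : ∃ m, Maximal (· ∈ S) m := by
    apply zorn_subset
    intro c hcS hchain
    refine ⟨⋃₀ c, ⟨?_, ?_⟩, fun s hs => subset_sUnion_of_mem hs⟩
    · rintro v ⟨t, htc, hvt⟩
      exact (hcS htc).1 v hvt
    · intro a ha b hb hab
      obtain ⟨ta, hta, hat⟩ := ha
      obtain ⟨tb, htb, hbt⟩ := hb
      rcases hchain.total hta htb with h | h
      · exact (hcS htb).2 (h hat) hbt hab
      · exact (hcS hta).2 hat (h hbt) hab
  have h𝒱 := h𝒱max.1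
  have h𝒱cnt : 𝒱.Countable :=
    hccc 𝒱 (fun c hc => ⟨(h𝒱.1 c hc).1, (h𝒱.1 c hc).2.1⟩) h𝒱.2
  have hopen : IsOpen (⋃₀ 𝒱) := isOpen_sUnion fun c hc => (h𝒱.1 c hc).1
  -- complement is nowhere dense
  have hnd : IsNowhereDense (⋃₀ 𝒱)ᶜ := by
    rw [IsNowhereDense, hopen.isClosed_compl.closure_eq]
    rw [eq_empty_iff_forall_notMem]
    intro x hx
    obtain ⟨i, hxi⟩ : ∃ i, x ∈ U i := mem_iUnion.mp (hcov (mem_univ x))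
    set W : Set L := interior (⋃₀ 𝒱)ᶜ ∩ U i with hW
    have hWopen : IsOpen W := isOpen_interior.inter (hUo i)
    have hWne : W.Nonempty := ⟨x, hx, hxi⟩
    have hWdisj : ∀ v ∈ 𝒱, Disjoint W v := by
      intro v hv
      refine Set.disjoint_left.mpr fun a haW hav => ?_
      exact (interior_subset haW.1) (subset_sUnion_of_mem hv hav)
    have hWnotmem : W ∉ 𝒱 := fun h => hWne.not_subset_empty (by
      simpa using (hWdisj W h).le_bot)
    have : insert W 𝒱 ∈ S := by
      constructor
      · rintro c (rfl | hc)
        · exact ⟨hWopen, hWne, i, inter_subset_right⟩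
        · exact h𝒱.1 c hc
      · intro a ha b hb hab
        rcases ha with rfl | ha <;> rcases hb with rfl | hb
        · exact absurd rfl hab
        · exact hWdisj b hb
        · exact (hWdisj a ha).symm
        · exact h𝒱.2 ha hb hab
    have := h𝒱max.2 this (subset_insert W 𝒱)
    exact hWnotmem (this (mem_insert W 𝒱))
  have hAcnt : ((⋃₀ 𝒱)ᶜ : Set L).Countable := hLuzin _ hnd
  -- pick indices
  have hchoice : ∀ v ∈ 𝒱, ∃ i, v ⊆ U i := fun v hv => (h𝒱.1 v hv).2.2
  choose f hf using hchoice
  have hchoice2 : ∀ a : L, ∃ i, a ∈ U i := fun a => mem_iUnion.mp (hcov (mem_univ a))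
  choose g hg using hchoice2
  classical
  refine ⟨(fun p : {v // v ∈ 𝒱} => f p.1 p.2) '' univ ∪ g '' (⋃₀ 𝒱)ᶜ, ?_, ?_⟩
  · exact ((countable_univ_iff.mpr h𝒱cnt.to_subtype).image _).union (hAcnt.image g)
  · intro x _
    by_cases hx : x ∈ ⋃₀ 𝒱
    · obtain ⟨v, hv, hxv⟩ := hx
      exact mem_iUnion₂.mpr ⟨f v hv, Or.inl ⟨⟨v, hv⟩, mem_univ _, rfl⟩, hf v hv hxv⟩
    · exact mem_iUnion₂.mpr ⟨g x, Or.inr ⟨x, hx, rfl⟩, hg x⟩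
end

section
/- Let K[X] denote the collection of compact nowhere dense subsets of a space X with the Pixley-Roy topology. If M ⊆ K[X] is Menger, then the union M* = ⋃{K : K ∈ M} is a Menger subspace of X. -/
open Set

/-- The underlying set of `𝒦[X]`: compact nowhere dense subsets of `X`. -/
def PRPoint (X : Type*) [TopologicalSpace X] : Type _ :=
  {K : Set X // IsCompact K ∧ IsNowhereDense K}

/-- The Pixley-Roy topology on `𝒦[X]`, generated by the sets
`[K,U] = {A : K ⊆ A ⊆ U}` for `K ∈ 𝒦[X]` and `U` open in `X`. -/
def pixleyRoy (X : Type*) [TopologicalSpace X] : TopologicalSpace (PRPoint X) :=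
  TopologicalSpace.generateFrom
    {B | ∃ (K : PRPoint X) (U : Set X), IsOpen U ∧
      B = {A : PRPoint X | K.1 ⊆ A.1 ∧ A.1 ⊆ U}}

/-- If `ℳ ⊆ 𝒦[X]` is Menger in the Pixley-Roy topology, then `⋃ ℳ` is a Menger
subspace of `X`. -/
theorem stmt6 {X : Type*} [TopologicalSpace X] (ℳ : Set (PRPoint X))
    (hM : @MengerSet (PRPoint X) (pixleyRoy X) ℳ) :
    MengerSet (⋃ K ∈ ℳ, K.1) := by
  intro 𝒰 hopen hcov
  -- for a finite F ⊆ 𝒰 n, the set of PR points contained in ⋃₀ F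
  set O : Set (Set X) → Set (PRPoint X) := fun F => {A : PRPoint X | A.1 ⊆ ⋃₀ F} with hO
  have hOopen : ∀ U : Set X, IsOpen U → @IsOpen _ (pixleyRoy X) {A : PRPoint X | A.1 ⊆ U} := by
    intro U hU
    letI := pixleyRoy X
    have : {A : PRPoint X | A.1 ⊆ U} =
        ⋃ A ∈ {A : PRPoint X | A.1 ⊆ U}, {B : PRPoint X | A.1 ⊆ B.1 ∧ B.1 ⊆ U} := by
      ext B
      constructor
      · intro hB
        exact mem_biUnion hB ⟨subset_rfl, hB⟩
      · intro hB
        rcases mem_iUnion₂.mp hB with ⟨A, hA, h1, h2⟩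
        exact h2
    rw [this]
    refine isOpen_biUnion fun A hA => ?_
    exact TopologicalSpace.isOpen_generateFrom_of_mem ⟨A, U, hU, rfl⟩
  -- the PR covers
  set 𝒲 : ℕ → Set (Set (PRPoint X)) :=
    fun n => O '' {F | F ⊆ 𝒰 n ∧ F.Finite} with h𝒲
  have hWopen : ∀ n, ∀ w ∈ 𝒲 n, @IsOpen _ (pixleyRoy X) w := by
    rintro n w ⟨F, ⟨hF1, hF2⟩, rfl⟩
    exact hOopen _ (isOpen_sUnion fun u hu => hopen n u (hF1 hu))
  have hWcov : ∀ n, ℳ ⊆ ⋃₀ 𝒲 n := by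
    intro n K hK
    have hKsub : K.1 ⊆ ⋃₀ 𝒰 n := fun x hx => hcov n (mem_biUnion hK hx)
    obtain ⟨F, hF𝒰, hFfin, hKF⟩ :=
      K.2.1.elim_finite_subcover_image (fun u hu => hopen n u hu) (by rwa [sUnion_eq_biUnion] at hKsub)
    exact ⟨O F, ⟨F, ⟨hF𝒰, hFfin⟩, rfl⟩, by rw [hO]; exact fun x hx => sUnion_eq_biUnion ▸ hKF hx⟩
  obtain ⟨𝒱', h𝒱'sub, h𝒱'cov⟩ := hM 𝒲 hWopen hWcov
  -- choose finite families
  have hex : ∀ n, ∀ w ∈ 𝒱' n, ∃ F : Set (Set X), F ⊆ 𝒰 n ∧ F.Finite ∧ w = O F := by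
    intro n w hw
    rcases (h𝒱'sub n).1 hw with ⟨F, ⟨h1, h2⟩, rfl⟩
    exact ⟨F, h1, h2, rfl⟩
  choose! F hF1 hF2 hF3 using hex
  refine ⟨fun n => ⋃ w ∈ 𝒱' n, F n w, fun n => ⟨?_, ?_⟩, ?_⟩
  · rintro u hu
    rcases mem_iUnion₂.mp hu with ⟨w, hw, hu⟩
    exact hF1 n w hw hu
  · exact Set.Finite.biUnion (h𝒱'sub n).2 (fun w hw => hF2 n w hw)
  · intro x hx
    rcases mem_iUnion₂.mp hx with ⟨K, hK, hxK⟩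
    rcases mem_iUnion.mp (h𝒱'cov hK) with ⟨n, hn⟩
    rcases hn with ⟨w, hw, hKw⟩
    have : K.1 ⊆ ⋃₀ F n w := by
      have := hF3 n w hw
      rw [this] at hKw
      exact hKw
    rcases this hxK with ⟨u, hu, hxu⟩
    exact mem_iUnion.mpr ⟨n, ⟨u, mem_iUnion₂.mpr ⟨w, hw, hu⟩, hxu⟩⟩
end

section
/- A topological space X is star Menger if and only if for every sequence (U_n) of open covers of X there exists a single Menger subspace M ⊆ X such that {St(M,U_n) : n ∈ ω} covers X. -/
open Set

/-- `X` is star Menger iff for every sequence of open covers `(𝒰ₙ)` there is a single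
Menger subspace `M` with `{St(M,𝒰ₙ) : n}` covering `X`. -/
theorem stmt7 {X : Type*} [TopologicalSpace X] :
    StarMenger X ↔
      ∀ 𝒰 : ℕ → Set (Set X), (∀ n, (∀ u ∈ 𝒰 n, IsOpen u) ∧ ⋃₀ 𝒰 n = univ) →
        ∃ M : Set X, MengerSet M ∧ ⋃ n, star' M (𝒰 n) = univ := by
  constructor
  · intro h 𝒰 h𝒰
    obtain ⟨M, hM, hst⟩ := h (𝒰 0) (h𝒰 0).1 (h𝒰 0).2
    exact ⟨M, hM, eq_univ_of_univ_subset (hst ▸ subset_iUnion (fun n => star' M (𝒰 n)) 0)⟩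
  · intro h 𝒰 hop hcov
    obtain ⟨M, hM, hst⟩ := h (fun _ => 𝒰) (fun _ => ⟨hop, hcov⟩)
    exact ⟨M, hM, by rw [← hst]; simp [iUnion_const]⟩
end

section
/- A topological space X is star Menger if and only if for every sequence (U_n) of open covers of X there exists a sequence (M_n) of Menger subspaces of X such that {St(M_n,U_n) : n ∈ ω} covers X. -/
open Set

/-- A countable union of Menger sets is Menger. -/
lemma mengerSet_iUnion {X : Type*} [TopologicalSpace X] {M : ℕ → Set X}
    (hM : ∀ n, MengerSet (M n)) : MengerSet (⋃ n, M n) := by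
  intro 𝒰 hop hcov
  set e : ℕ ≃ ℕ × ℕ := (Denumerable.eqv (ℕ × ℕ)).symm
  -- for each n, apply Menger of M n to covers i ↦ 𝒰 (e.symm (n, i))
  have h : ∀ n, ∃ 𝒱 : ℕ → Set (Set X),
      (∀ i, 𝒱 i ⊆ 𝒰 (e.symm (n, i)) ∧ (𝒱 i).Finite) ∧ M n ⊆ ⋃ i, ⋃₀ 𝒱 i := by
    intro n
    exact hM n (fun i => 𝒰 (e.symm (n, i))) (fun i => hop _)
      (fun i => (subset_iUnion M n).trans (hcov _))
  choose W hW hWcov using h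
  refine ⟨fun m => W (e m).1 (e m).2, ?_, ?_⟩
  · intro m
    have := hW (e m).1 (e m).2
    rwa [Prod.mk.eta, Equiv.symm_apply_apply] at this
  · intro x hx
    simp only [mem_iUnion] at hx ⊢
    obtain ⟨n, hn⟩ := hx
    obtain ⟨i, hi⟩ := mem_iUnion.mp (hWcov n hn)
    exact ⟨e.symm (n, i), by rwa [Equiv.apply_symm_apply]⟩

/-- `X` is star Menger iff for every sequence of open covers `(𝒰ₙ)` there is a sequence
`(Mₙ)` of Menger subspaces with `{St(Mₙ,𝒰ₙ) : n}` covering `X`. -/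
theorem stmt8 {X : Type*} [TopologicalSpace X] :
    StarMenger X ↔
      ∀ 𝒰 : ℕ → Set (Set X), (∀ n, (∀ u ∈ 𝒰 n, IsOpen u) ∧ ⋃₀ 𝒰 n = univ) →
        ∃ M : ℕ → Set X, (∀ n, MengerSet (M n)) ∧ ⋃ n, star' (M n) (𝒰 n) = univ := by
  constructor
  · intro h 𝒰 h𝒰
    have h' : ∀ n, ∃ M : Set X, MengerSet M ∧ star' M (𝒰 n) = univ :=
      fun n => h (𝒰 n) (h𝒰 n).1 (h𝒰 n).2
    choose M hM hst using h'
    exact ⟨M, hM, by rw [iUnion_congr hst]; exact iUnion_const univ⟩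
  · intro h 𝒰 hop hcov
    obtain ⟨M, hM, hst⟩ := h (fun _ => 𝒰) (fun _ => ⟨hop, hcov⟩)
    refine ⟨⋃ n, M n, mengerSet_iUnion hM, ?_⟩
    apply eq_univ_of_univ_subset
    rw [← hst]
    refine iUnion_subset fun n => sUnion_subset_sUnion ?_
    intro u hu
    exact ⟨hu.1, hu.2.mono (inter_subset_inter_right u (subset_iUnion M n))⟩
end

section
/- The product of a Menger space with a compact space is Menger. -/
open Set

/-- The product of a Menger space with a compact space is Menger. -/
theorem stmt14 {X Y : Type*} [TopologicalSpace X] [TopologicalSpace Y]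
    (hX : MengerSpace X) [CompactSpace Y] : MengerSpace (X × Y) := by
  intro 𝒰 h𝒰
  classical
  -- For each n, the family of open W ⊆ X such that W × Y is covered by finitely many
  -- members of 𝒰 n.
  set 𝒲 : ℕ → Set (Set X) := fun n =>
    {W | IsOpen W ∧ ∃ F, F ⊆ 𝒰 n ∧ F.Finite ∧ W ×ˢ (univ : Set Y) ⊆ ⋃₀ F} with h𝒲
  have h𝒲cover : ∀ n, (∀ u ∈ 𝒲 n, IsOpen u) ∧ ⋃₀ 𝒲 n = univ := by
    intro n
    constructor
    · intro u hu; exact hu.1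
    · apply eq_univ_of_forall
      intro x
      -- {x} × Y is compact and covered by 𝒰 n
      have hcomp : IsCompact (({x} : Set X) ×ˢ (univ : Set Y)) :=
        isCompact_singleton.prod isCompact_univ
      obtain ⟨t, ht⟩ := hcomp.elim_finite_subcover (fun u : 𝒰 n => (u : Set (X × Y)))
        (fun u => (h𝒰 n).1 u u.2)
        (by
          intro p hp
          have : p ∈ ⋃₀ 𝒰 n := by rw [(h𝒰 n).2]; trivial
          obtain ⟨u, hu, hpu⟩ := this
          exact mem_iUnion.2 ⟨⟨u, hu⟩, hpu⟩)
      set N : Set (X × Y) := ⋃ u ∈ t, (u : Set (X × Y)) with hN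
      have hNopen : IsOpen N := isOpen_biUnion fun u _ => (h𝒰 n).1 u u.2
      have hsub : ({x} : Set X) ×ˢ (univ : Set Y) ⊆ N := by
        intro p hp
        have := ht hp
        simpa [hN] using this
      obtain ⟨u, v, huo, hvo, hxu, huniv, huv⟩ :=
        generalized_tube_lemma isCompact_singleton isCompact_univ hNopen hsub
      have hvuniv : v = univ := eq_univ_of_univ_subset huniv
      refine ⟨u, ⟨huo, (fun w : 𝒰 n => (w : Set (X × Y))) '' t, ?_, ?_, ?_⟩, hxu rfl⟩
      · rintro w ⟨i, _, rfl⟩; exact i.2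
      · exact (t.finite_toSet).image _
      · intro p hp
        have : p ∈ N := huv (by
          constructor
          · exact hp.1
          · rw [hvuniv]; trivial)
        simp only [hN, mem_iUnion] at this
        obtain ⟨i, hi, hpi⟩ := this
        exact ⟨i, ⟨i, hi, rfl⟩, hpi⟩
  obtain ⟨𝒱, h𝒱sub, h𝒱cover⟩ := hX 𝒲 h𝒲cover
  -- choose for each W ∈ 𝒲 n a finite subfamily of 𝒰 n covering W × Y
  have key : ∀ n, ∀ W ∈ 𝒲 n, ∃ F, F ⊆ 𝒰 n ∧ F.Finite ∧ W ×ˢ (univ : Set Y) ⊆ ⋃₀ F :=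
    fun n W hW => hW.2
  choose! F hFsub hFfin hFcov using key
  refine ⟨fun n => ⋃ W ∈ 𝒱 n, F n W, ?_, ?_⟩
  · intro n
    constructor
    · intro u hu
      obtain ⟨W, hW, hu⟩ := mem_iUnion₂.1 hu
      exact hFsub n W ((h𝒱sub n).1 hW) hu
    · exact (h𝒱sub n).2.biUnion fun W hW => hFfin n W ((h𝒱sub n).1 hW)
  · apply eq_univ_of_forall
    rintro ⟨x, y⟩
    have : x ∈ ⋃ n, ⋃₀ 𝒱 n := by rw [h𝒱cover]; trivial
    obtain ⟨n, W, hW, hxW⟩ := by simpa [mem_iUnion] using this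
    have : (x, y) ∈ ⋃₀ F n W :=
      hFcov n W ((h𝒱sub n).1 hW) ⟨hxW, trivial⟩
    obtain ⟨u, hu, hpu⟩ := this
    exact mem_iUnion.2 ⟨n, u, mem_iUnion₂.2 ⟨W, hW, hu⟩, hpu⟩
end

section
/- The perfect preimage of a Menger space is Menger: if f : X → Y is a continuous closed surjection with compact fibers and Y is Menger, then X is Menger. -/
open Set

/-- The perfect preimage of a Menger space is Menger. -/
theorem stmt18 {X Y : Type*} [TopologicalSpace X] [TopologicalSpace Y]
    (f : X → Y) (hc : Continuous f) (hcl : IsClosedMap f)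
    (hsurj : Function.Surjective f) (hfib : ∀ y : Y, IsCompact (f ⁻¹' {y}))
    (hY : MengerSpace Y) : MengerSpace X := by
  intro 𝒰 h𝒰
  rcases isEmpty_or_nonempty X with hX | hX
  · refine ⟨fun _ => ∅, fun n => ⟨empty_subset _, finite_empty⟩, ?_⟩
    exact eq_univ_of_forall fun x => (IsEmpty.false x).elim
  have hYne : Nonempty Y := ⟨f hX.some⟩
  -- Step 1: finite subcovers of each fiber
  have step1 : ∀ n y, ∃ t : Set (Set X), t ⊆ 𝒰 n ∧ t.Finite ∧ f ⁻¹' {y} ⊆ ⋃₀ t := by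
    intro n y
    have hcov : f ⁻¹' {y} ⊆ ⋃ u : 𝒰 n, (u : Set X) := by
      rw [← sUnion_eq_iUnion, (h𝒰 n).2]; exact subset_univ _
    obtain ⟨s, hs⟩ := (hfib y).elim_finite_subcover (fun u : 𝒰 n => (u : Set X))
      (fun u => (h𝒰 n).1 u u.2) hcov
    refine ⟨(↑) '' (s : Set (𝒰 n)), ?_, s.finite_toSet.image _, ?_⟩
    · rintro _ ⟨u, _, rfl⟩; exact u.2
    · intro x hx
      obtain ⟨u, hu, hxu⟩ := mem_iUnion₂.mp (hs hx)
      exact ⟨u, ⟨u, hu, rfl⟩, hxu⟩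
  choose t ht1 ht2 ht3 using step1
  -- Step 2: open tubes around fibers using closedness of f
  set V : ℕ → Y → Set Y := fun n y => (f '' (⋃₀ t n y)ᶜ)ᶜ with hVdef
  have hVopen : ∀ n y, IsOpen (V n y) := by
    intro n y
    have : IsClosed (f '' (⋃₀ t n y)ᶜ) :=
      hcl _ (isClosed_compl_iff.mpr (isOpen_sUnion fun u hu => (h𝒰 n).1 u (ht1 n y hu)))
    exact this.isOpen_compl
  have hyV : ∀ n y, y ∈ V n y := by
    intro n y
    rintro ⟨x, hx, rfl⟩
    exact hx (ht3 n (f x) rfl)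
  have hVpre : ∀ n y, f ⁻¹' (V n y) ⊆ ⋃₀ t n y := by
    intro n y x hx
    by_contra h
    exact hx ⟨x, h, rfl⟩
  -- Apply Menger property of Y to the covers by tubes
  obtain ⟨W, hW1, hW2⟩ := hY (fun n => range (V n)) (by
    intro n
    constructor
    · rintro _ ⟨y, rfl⟩; exact hVopen n y
    · refine eq_univ_of_forall fun y => ⟨V n y, mem_range_self y, hyV n y⟩)
  -- Choose witnesses for each selected tube
  have hch : ∀ n w, ∃ y : Y, w ∈ W n → V n y = w := by
    intro n w
    by_cases hw : w ∈ W n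
    · obtain ⟨y, hy⟩ := (hW1 n).1 hw
      exact ⟨y, fun _ => hy⟩
    · exact ⟨Classical.arbitrary Y, fun h => absurd h hw⟩
  choose g hg using hch
  refine ⟨fun n => ⋃ w ∈ W n, t n (g n w), ?_, ?_⟩
  · intro n
    refine ⟨iUnion₂_subset fun w _ => ht1 n (g n w), (hW1 n).2.biUnion fun w _ => ht2 n (g n w)⟩
  · refine eq_univ_of_forall fun x => ?_
    have : f x ∈ ⋃ n, ⋃₀ W n := hW2 ▸ mem_univ (f x)
    obtain ⟨_, ⟨n, rfl⟩, w, hw, hfw⟩ := this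
    have hVw : V n (g n w) = w := hg n w hw
    have hx : x ∈ ⋃₀ t n (g n w) := hVpre n (g n w) (by rw [mem_preimage, hVw]; exact hfw)
    obtain ⟨u, hu, hxu⟩ := hx
    exact mem_iUnion.mpr ⟨n, ⟨u, mem_biUnion hw hu, hxu⟩⟩
end

section
/- If f : X → Y is an open perfect mapping and Y is star Menger, then X is star Menger. -/
open Set

/-- finite subcover of a compact fiber from a family of open sets -/
lemma fincov {X : Type*} [TopologicalSpace X] {s : Set X} (hs : IsCompact s)
    {𝒰 : Set (Set X)} (hop : ∀ u ∈ 𝒰, IsOpen u) (hcov : s ⊆ ⋃₀ 𝒰) :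
    ∃ G ⊆ 𝒰, G.Finite ∧ s ⊆ ⋃₀ G := by
  rw [sUnion_eq_biUnion] at hcov
  obtain ⟨G, hG, hfin, hsub⟩ := hs.elim_finite_subcover_image hop hcov
  exact ⟨G, hG, hfin, by rwa [sUnion_eq_biUnion]⟩

/-- perfect preimage of a Menger set is Menger -/
lemma menger_preimage {X Y : Type*} [TopologicalSpace X] [TopologicalSpace Y]
    (f : X → Y) (hc : Continuous f) (hcl : IsClosedMap f)
    (hfib : ∀ y, IsCompact (f ⁻¹' {y})) (N : Set Y) (hN : MengerSet N) :
    MengerSet (f ⁻¹' N) := by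
  intro 𝒰 hop hcov
  have key : ∀ n (y : Y), ∃ G : Set (Set X), G ⊆ 𝒰 n ∧ G.Finite ∧
      (y ∈ N → f ⁻¹' {y} ⊆ ⋃₀ G) := by
    intro n y
    by_cases hy : y ∈ N
    · have hsub : f ⁻¹' {y} ⊆ ⋃₀ 𝒰 n := fun x hx => hcov n (by
        simp only [mem_preimage] at hx ⊢; rw [hx]; exact hy)
      obtain ⟨G, hG, hfin, hs⟩ := fincov (hfib y) (hop n) hsub
      exact ⟨G, hG, hfin, fun _ => hs⟩
    · exact ⟨∅, empty_subset _, finite_empty, fun h => absurd h hy⟩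
  choose G hG1 hG2 hG3 using key
  -- the tube open sets in Y
  set W : ℕ → Y → Set Y := fun n y => (f '' (⋃₀ G n y)ᶜ)ᶜ with hW
  have hWopen : ∀ n y, IsOpen (W n y) := by
    intro n y
    rw [isOpen_compl_iff]
    exact hcl _ (isOpen_sUnion (fun u hu => hop n u (hG1 n y hu))).isClosed_compl
  have hWmem : ∀ n y, y ∈ N → y ∈ W n y := by
    intro n y hy hmem
    obtain ⟨x, hx, hfx⟩ := hmem
    exact hx (hG3 n y hy (by simp [hfx]))
  have hWpre : ∀ n y, f ⁻¹' (W n y) ⊆ ⋃₀ G n y := by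
    intro n y x hx
    by_contra h
    exact hx ⟨x, h, rfl⟩
  set 𝒲 : ℕ → Set (Set Y) := fun n => {w | ∃ y ∈ N, w = W n y} with h𝒲
  obtain ⟨𝒱', h𝒱'1, h𝒱'2⟩ := hN 𝒲
    (by rintro n w ⟨y, hy, rfl⟩; exact hWopen n y)
    (by intro n y hy; exact ⟨W n y, ⟨y, hy, rfl⟩, hWmem n y hy⟩)
  have pick : ∀ n (w : Set Y), ∃ Gp : Set (Set X), Gp ⊆ 𝒰 n ∧ Gp.Finite ∧
      (w ∈ 𝒱' n → f ⁻¹' w ⊆ ⋃₀ Gp) := by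
    intro n w
    by_cases hw : w ∈ 𝒱' n
    · obtain ⟨y, hy, rfl⟩ := (h𝒱'1 n).1 hw
      exact ⟨G n y, hG1 n y, hG2 n y, fun _ => hWpre n y⟩
    · exact ⟨∅, empty_subset _, finite_empty, fun h => absurd h hw⟩
  choose Gp hp1 hp2 hp3 using pick
  refine ⟨fun n => ⋃ w ∈ 𝒱' n, Gp n w, fun n => ⟨?_, ?_⟩, ?_⟩
  · intro u hu
    simp only [mem_iUnion] at hu
    obtain ⟨w, _, hu⟩ := hu
    exact hp1 n w hu
  · exact Set.Finite.biUnion (h𝒱'1 n).2 (fun w _ => hp2 n w)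
  · intro x hx
    have := h𝒱'2 hx
    simp only [mem_iUnion] at this
    obtain ⟨n, w, hw, hfx⟩ := this
    obtain ⟨u, hu, hxu⟩ := hp3 n w hw hfx
    exact mem_iUnion.mpr ⟨n, ⟨u, mem_iUnion₂.mpr ⟨w, hw, hu⟩, hxu⟩⟩

/-- If `f : X → Y` is an open perfect mapping and `Y` is star Menger, then `X` is
star Menger. -/
theorem stmt19 {X Y : Type*} [TopologicalSpace X] [TopologicalSpace Y]
    (f : X → Y) (hc : Continuous f) (hopen : IsOpenMap f) (hcl : IsClosedMap f)
    (hsurj : Function.Surjective f) (hfib : ∀ y : Y, IsCompact (f ⁻¹' {y}))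
    (hY : StarMenger Y) : StarMenger X := by
  intro 𝒰 hop hcov
  -- for each y, a finite subfamily covering the fiber, each member meeting the fiber
  have key : ∀ y : Y, ∃ G : Set (Set X), G ⊆ 𝒰 ∧ G.Finite ∧ f ⁻¹' {y} ⊆ ⋃₀ G ∧
      ∀ u ∈ G, (u ∩ f ⁻¹' {y}).Nonempty := by
    intro y
    obtain ⟨G₀, hG₀, hfin, hs⟩ := fincov (hfib y) hop (by rw [hcov]; exact subset_univ _)
    refine ⟨{u ∈ G₀ | (u ∩ f ⁻¹' {y}).Nonempty}, fun u hu => hG₀ hu.1,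
      hfin.subset (sep_subset _ _), ?_, fun u hu => hu.2⟩
    intro x hx
    obtain ⟨u, hu, hxu⟩ := hs hx
    exact ⟨u, ⟨hu, ⟨x, hxu, hx⟩⟩, hxu⟩
  choose G hG1 hG2 hG3 hG4 using key
  set W : Y → Set Y := fun y => (f '' (⋃₀ G y)ᶜ)ᶜ ∩ ⋂ u ∈ G y, f '' u with hW
  have hWopen : ∀ y, IsOpen (W y) := by
    intro y
    refine IsOpen.inter (isOpen_compl_iff.mpr
      (hcl _ (isOpen_sUnion (fun u hu => hop u (hG1 y hu))).isClosed_compl)) ?_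
    exact (hG2 y).isOpen_biInter (fun u hu => hopen u (hop u (hG1 y hu)))
  have hWmem : ∀ y, y ∈ W y := by
    intro y
    constructor
    · rintro ⟨x, hx, hfx⟩
      exact hx (hG3 y (by simp [hfx]))
    · simp only [mem_iInter]
      intro u hu
      obtain ⟨x, hxu, hxf⟩ := hG4 y u hu
      exact ⟨x, hxu, hxf⟩
  have hWpre : ∀ y, f ⁻¹' (W y) ⊆ ⋃₀ G y := by
    intro y x hx
    by_contra h
    exact hx.1 ⟨x, h, rfl⟩
  obtain ⟨N, hNmen, hNstar⟩ := hY {w | ∃ y, w = W y}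
    (by rintro w ⟨y, rfl⟩; exact hWopen y)
    (eq_univ_of_forall fun y => ⟨W y, ⟨y, rfl⟩, hWmem y⟩)
  refine ⟨f ⁻¹' N, menger_preimage f hc hcl hfib N hNmen, eq_univ_of_forall ?_⟩
  intro x
  have : f x ∈ star' N {w | ∃ y, w = W y} := by rw [hNstar]; trivial
  obtain ⟨w, ⟨⟨y, rfl⟩, ⟨z, hzw, hzN⟩⟩, hfxw⟩ := this
  obtain ⟨u, hu, hxu⟩ := hWpre y hfxw
  obtain ⟨x', hx'u, hx'z⟩ : z ∈ f '' u := by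
    have := hzw.2
    simp only [mem_iInter] at this
    exact this u hu
  exact ⟨u, ⟨hG1 y hu, ⟨x', hx'u, by rw [mem_preimage, hx'z]; exact hzN⟩⟩, hxu⟩
end
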